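/- Let X and Y be distinct cyclic flats of a matroid M with X ⊊ Y, where a cyclic flat is a flat equal to the union of the circuits it contains. Then 0 < r(Y) − r(X) < |Y \ X|, where r is the rank function of M. -/

import Mathlib

open Matroid Set
open scoped Classical

variable {α : Type*}

/-- A circuit of a matroid: a minimal dependent set. -/
def Matroid.Circuit' (M : Matroid α) (C : Set α) : Prop :=
  M.Dep C ∧ ∀ D, D ⊂ C → M.Indep D

/-- The cyclic part `cyc_M(F)` of a set `F`: the union of all circuits of `M` contained
in `F`. -/
def Matroid.cyc (M : Matroid α) (F : Set α) : Set α :=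
  ⋃₀ {C | M.Circuit' C ∧ C ⊆ F}

/-- The (extended) rank of a set in a matroid: the supremum of the cardinalities of the
independent subsets. -/
noncomputable def Matroid.eRk' (M : Matroid α) (X : Set α) : ℕ∞ :=
  ⨆ I ∈ {I | M.Indep I ∧ I ⊆ X}, I.encard

/-- The rank of a matroid. -/
noncomputable def Matroid.rk' (M : Matroid α) : ℕ∞ := M.eRk' M.E

/-- A matroid is loopfree if every element of the ground set is independent. -/
def Matroid.Loopless' (M : Matroid α) : Prop := ∀ e ∈ M.E, M.Indep {e}

/-- `U` is the matroid union `M ∨ N`: its independent sets are exactly the unions of an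
independent set of `M` and an independent set of `N`. -/
def IsMatroidUnion (M N U : Matroid α) : Prop :=
  U.E = M.E ∧ ∀ X, U.Indep X ↔ ∃ I J, M.Indep I ∧ N.Indep J ∧ X = I ∪ J

/-- `P` is the matroid intersection `M ∧ N := (M* ∨ N*)*`. -/
def IsMatroidInter (M N P : Matroid α) : Prop :=
  ∃ U, IsMatroidUnion M✶ N✶ U ∧ P = U✶

/-- Contraction of a set in a matroid, defined by duality: `M/A = (M* \ A)*`. -/
def Matroid.contract' (M : Matroid α) (A : Set α) : Matroid α := (M✶ ↾ (M.E \ A))✶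

/-- A cyclic flat: a flat which is the union of the circuits contained in it. -/
def Matroid.CyclicFlat (M : Matroid α) (F : Set α) : Prop :=
  M.IsFlat F ∧ F = M.cyc F

/-- A nested matroid: one whose cyclic flats form a chain under inclusion. -/
def Matroid.Nested (M : Matroid α) : Prop := IsChain (· ⊆ ·) {F | M.CyclicFlat F}

/-! Since `X` is a flat, any `e ∈ Y \ X` lies outside the closure of `X`, so adding it raises the
rank. Since `Y` is cyclic, `e` lies on a circuit inside `Y`, hence `e ∈ cl(Y \ {e})` and
`r(Y) = r(Y \ {e}) ≤ r(X) + |Y \ X| - 1`. -/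

namespace Matroid

variable {M : Matroid α} {C F X Y : Set α} {e : α}

lemma eRk'_eq_eRk (M : Matroid α) (X : Set α) : M.eRk' X = M.eRk X := by
  refine le_antisymm (iSup₂_le fun I hI ↦ hI.1.encard_le_eRk_of_subset hI.2) ?_
  obtain ⟨I, hI⟩ := M.exists_isBasis' X
  rw [← hI.encard_eq_eRk]
  exact le_iSup₂ (f := fun I (_ : I ∈ {I | M.Indep I ∧ I ⊆ X}) ↦ I.encard) I
    ⟨hI.indep, hI.subset⟩

lemma circuit'_iff_isCircuit : M.Circuit' C ↔ M.IsCircuit C :=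
  isCircuit_iff_forall_ssubset.symm

lemma closure_sdiff_singleton_of_mem_cyc (he : e ∈ M.cyc F) :
    M.closure (F \ {e}) = M.closure F := by
  obtain ⟨C, ⟨hC, hCF⟩, heC⟩ := he
  have hC : M.IsCircuit C := circuit'_iff_isCircuit.mp hC
  refine (mem_closure_sdiff_singleton_iff_closure (hCF heC) (hC.subset_ground heC)).mp ?_
  exact M.closure_subset_closure (sdiff_subset_sdiff_left hCF)
    (hC.mem_closure_sdiff_singleton_of_mem heC)

lemma eRk_sdiff_singleton_of_mem_cyc (he : e ∈ M.cyc F) : M.eRk (F \ {e}) = M.eRk F := by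
  rw [← eRk_closure_eq, closure_sdiff_singleton_of_mem_cyc he, eRk_closure_eq]

lemma IsFlat.eRk_lt_eRk_of_ssubset (hX : M.IsFlat X) (hXfin : M.IsRkFinite X) (hXY : X ⊂ Y)
    (hYE : Y ⊆ M.E := by aesop_mat) : M.eRk X < M.eRk Y := by
  obtain ⟨e, heY, heX⟩ := exists_of_ssubset hXY
  have he : e ∈ M.E \ M.closure X := ⟨hYE heY, by rwa [hX.closure]⟩
  calc M.eRk X < M.eRk X + 1 := ENat.lt_add_one_iff hXfin.eRk_lt_top.ne |>.mpr le_rfl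
    _ = M.eRk (insert e X) := (eRk_insert_eq_add_one he).symm
    _ ≤ M.eRk Y := M.eRk_mono (insert_subset heY hXY.subset)

lemma eRk_lt_eRk_add_encard_sdiff (hY : Y ⊆ M.cyc Y) (hXfin : M.IsRkFinite X) (hXY : X ⊂ Y)
    (hYX : (Y \ X).Finite) : M.eRk Y < M.eRk X + (Y \ X).encard := by
  obtain ⟨e, heY, heX⟩ := exists_of_ssubset hXY
  have hsub : Y \ {e} ⊆ X ∪ (Y \ X) \ {e} := by
    rintro x ⟨hxY, hxe⟩
    by_cases hxX : x ∈ X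
    exacts [.inl hxX, .inr ⟨⟨hxY, hxX⟩, hxe⟩]
  calc M.eRk Y = M.eRk (Y \ {e}) := (eRk_sdiff_singleton_of_mem_cyc (hY heY)).symm
    _ ≤ M.eRk (X ∪ (Y \ X) \ {e}) := M.eRk_mono hsub
    _ ≤ M.eRk X + ((Y \ X) \ {e}).encard := M.eRk_union_le_eRk_add_encard _ _
    _ < M.eRk X + (Y \ X).encard := by
      refine WithTop.add_lt_add_left hXfin.eRk_lt_top.ne ?_
      exact (hYX.subset sdiff_subset).encard_lt_encard (sdiff_singleton_ssubset.mpr ⟨heY, heX⟩)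

end Matroid

/-- If `X ⊊ Y` are cyclic flats of a finite matroid `M`, then
`0 < r(Y) - r(X) < |Y \ X|`. -/
theorem cyclicFlat_rank_gap (M : Matroid α) [M.Finite] (X Y : Set α)
    (hX : M.CyclicFlat X) (hY : M.CyclicFlat Y) (hXY : X ⊂ Y) :
    M.eRk' X < M.eRk' Y ∧ M.eRk' Y < M.eRk' X + (Y \ X).encard := by
  rw [M.eRk'_eq_eRk X, M.eRk'_eq_eRk Y]
  have hXfin : M.IsRkFinite X := M.isRkFinite_set X
  exact ⟨hX.1.eRk_lt_eRk_of_ssubset hXfin hXY hY.1.subset_ground,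
    eRk_lt_eRk_add_encard_sdiff hY.2.le hXfin hXY (M.ground_finite.subset
      (sdiff_subset.trans hY.1.subset_ground))⟩
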